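/- Let ρ be a positive integer and define α_c(ρ) := inf{α > 0 : there exists x ∈ [0,1] with x(1 − 2(1 − (1−x)²)^ρ) + 1 − 1/α > 0}. Then for every α with α_c(ρ) < α < 1, the equation x(1 − 2(1 − (1−x)²)^ρ) + 1 − 1/α = 0 has exactly two distinct solutions x in the open interval (0,1). -/

import Mathlib

noncomputable def alphaC (ρ : ℕ) : ℝ :=
  sInf {α : ℝ | 0 < α ∧ ∃ x ∈ Set.Icc (0:ℝ) 1,
    x * (1 - 2 * (1 - (1 - x) ^ 2) ^ ρ) + 1 - 1 / α > 0}

/-!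
Write `g(x) = x (1 - 2 (x (2 - x))^ρ)`, so that the solutions are the roots of `g = c` with
`c = 1/α - 1 > 0`. The condition `α > α_c` gives a point of `[0,1]` where `g > c`, while
`g(0) = 0 < c` and `g(1) = -1 < c`, so there is a solution on each side of it.
On `(0,1)` the equation `g(z) = c` reads `2 z^(ρ+1) (2 - z)^ρ = z - c`; taking logarithms, the
solutions are the zeros of `D(z) = (ρ+1) log z + ρ log (2 - z) - log (z - c) + log 2` on `(c,1)`.
Clearing denominators, `D'` has the sign of a quadratic with leading coefficient `-2ρ`. Three
zeros of `D` together with `D(1) > 0` would give, by Rolle and the mean value theorem, two zeros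
of this quadratic followed by a point where it is positive, which is impossible.
-/

open Real Set

noncomputable def blockingMap (ρ : ℕ) (x : ℝ) : ℝ :=
  x * (1 - 2 * (1 - (1 - x) ^ 2) ^ ρ)

noncomputable def rootLog (r c x : ℝ) : ℝ :=
  (r + 1) * log x + r * log (2 - x) - log (x - c) + log 2

noncomputable def rootLogDeriv (r c x : ℝ) : ℝ :=
  (r + 1) / x - r / (2 - x) - 1 / (x - c)

def rootLogNumerator (r c x : ℝ) : ℝ :=
  (r + 1) * (2 - x) * (x - c) - r * x * (x - c) - x * (2 - x)

section RootLog

variable {r c : ℝ}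

lemma hasDerivAt_rootLog {x : ℝ} (hx0 : 0 < x) (hx2 : x < 2) (hcx : c < x) :
    HasDerivAt (rootLog r c) (rootLogDeriv r c x) x := by
  have hlog := (hasDerivAt_log hx0.ne').const_mul (r + 1)
  have hlog2 := (((hasDerivAt_id x).const_sub 2).log (sub_pos.2 hx2).ne').const_mul r
  have hlogc := ((hasDerivAt_id x).sub_const c).log (sub_pos.2 hcx).ne'
  refine (((hlog.add hlog2).sub hlogc).add_const (log 2)).congr_deriv ?_
  simp only [id, rootLogDeriv]
  field_simp
  ring

lemma continuousOn_rootLog {a b : ℝ} (hc : 0 ≤ c) (hca : c < a) (hb : b < 2) :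
    ContinuousOn (rootLog r c) (Icc a b) := fun _ hx =>
  (hasDerivAt_rootLog (hc.trans_lt (hca.trans_le hx.1)) (hx.2.trans_lt hb)
    (hca.trans_le hx.1)).continuousAt.continuousWithinAt

lemma rootLogNumerator_eq_deriv_mul {x : ℝ} (hx0 : x ≠ 0) (hx2 : 2 - x ≠ 0) (hcx : x - c ≠ 0) :
    rootLogNumerator r c x = rootLogDeriv r c x * (x * (2 - x) * (x - c)) := by
  unfold rootLogNumerator rootLogDeriv
  field_simp

lemma exists_rootLogNumerator_eq_zero {a b : ℝ} (hc : 0 ≤ c) (hca : c < a) (hab : a < b)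
    (hb : b < 2) (h : rootLog r c a = rootLog r c b) :
    ∃ w ∈ Ioo a b, rootLogNumerator r c w = 0 := by
  obtain ⟨w, hw, hdw⟩ := exists_hasDerivAt_eq_zero hab (continuousOn_rootLog hc hca hb) h
    fun x hx => hasDerivAt_rootLog (hc.trans_lt (hca.trans hx.1)) (by linarith [hx.2])
      (hca.trans hx.1)
  refine ⟨w, hw, ?_⟩
  rw [rootLogNumerator_eq_deriv_mul (hc.trans_lt (hca.trans hw.1)).ne' (by linarith [hw.2])
    (by linarith [hw.1]), hdw, zero_mul]

lemma rootLog_one_pos (hc0 : 0 ≤ c) (hc1 : c < 1) : 0 < rootLog r c 1 := by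
  have : log (1 - c) < log 2 := log_lt_log (by linarith) (by linarith)
  simp only [rootLog, log_one, mul_zero, zero_add]
  norm_num
  linarith

lemma exists_rootLogNumerator_pos {a : ℝ} (hc : 0 ≤ c) (hca : c < a) (ha : a < 1)
    (h : rootLog r c a = 0) : ∃ w ∈ Ioo a 1, 0 < rootLogNumerator r c w := by
  obtain ⟨w, hw, hdw⟩ := exists_hasDerivAt_eq_slope (rootLog r c) (rootLogDeriv r c) ha
    (continuousOn_rootLog hc hca one_lt_two)
    fun x hx => hasDerivAt_rootLog (hc.trans_lt (hca.trans hx.1)) (by linarith [hx.2])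
      (hca.trans hx.1)
  have hcw := hca.trans hw.1
  have hw0 := hc.trans_lt hcw
  refine ⟨w, hw, ?_⟩
  rw [rootLogNumerator_eq_deriv_mul hw0.ne' (by linarith [hw.2]) (by linarith), hdw, h, sub_zero]
  have := rootLog_one_pos (r := r) hc (hca.trans ha)
  have := hw.2
  exact mul_pos (div_pos ‹_› (by linarith)) (mul_pos (mul_pos hw0 (by linarith)) (by linarith))

lemma rootLogNumerator_neg_of_lt {u v w : ℝ} (hr : 0 < r) (huv : u < v) (hvw : v < w)
    (hu : rootLogNumerator r c u = 0) (hv : rootLogNumerator r c v = 0) :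
    rootLogNumerator r c w < 0 := by
  have hfactor : rootLogNumerator r c w = -2 * r * (w - u) * (w - v) := by
    apply mul_left_cancel₀ (sub_pos.2 huv).ne'
    unfold rootLogNumerator at hu hv ⊢
    linear_combination (-(w - v)) * hu + (w - u) * hv
  rw [hfactor]
  have := mul_pos (mul_pos hr (sub_pos.2 (huv.trans hvw))) (sub_pos.2 hvw)
  linarith

lemma rootLog_ne_zero_of_lt_of_lt {z₁ z₂ z₃ : ℝ} (hr : 0 < r) (hc : 0 ≤ c) (hcz : c < z₁)
    (h₁₂ : z₁ < z₂) (h₂₃ : z₂ < z₃) (hz₃ : z₃ < 1)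
    (hD₁ : rootLog r c z₁ = 0) (hD₂ : rootLog r c z₂ = 0) : rootLog r c z₃ ≠ 0 := by
  intro hD₃
  have hc₂ := hcz.trans h₁₂
  obtain ⟨w₁, hw₁, hN₁⟩ := exists_rootLogNumerator_eq_zero hc hcz h₁₂ (by linarith)
    (hD₁.trans hD₂.symm)
  obtain ⟨w₂, hw₂, hN₂⟩ := exists_rootLogNumerator_eq_zero hc hc₂ h₂₃ (by linarith)
    (hD₂.trans hD₃.symm)
  obtain ⟨w₃, hw₃, hN₃⟩ := exists_rootLogNumerator_pos hc (hc₂.trans h₂₃) hz₃ hD₃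
  exact hN₃.not_gt (rootLogNumerator_neg_of_lt hr (hw₁.2.trans hw₂.1) (hw₂.2.trans hw₃.1) hN₁ hN₂)

end RootLog

section BlockingMap

variable {ρ : ℕ}

lemma continuous_blockingMap : Continuous (blockingMap ρ) := by
  unfold blockingMap; fun_prop

lemma blockingMap_zero : blockingMap ρ 0 = 0 := by simp [blockingMap]

lemma blockingMap_one : blockingMap ρ 1 = -1 := by norm_num [blockingMap]

lemma lt_and_rootLog_eq_zero_of_blockingMap_eq {c z : ℝ} (hz : z ∈ Ioo (0:ℝ) 1)
    (h : blockingMap ρ z = c) : c < z ∧ rootLog ρ c z = 0 := by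
  obtain ⟨hz0, hz1⟩ := hz
  have hcz : z - c = 2 * z * (z * (2 - z)) ^ ρ := by
    rw [← h, blockingMap]; ring
  have hpos : 0 < z * (2 - z) := mul_pos hz0 (by linarith)
  have hzc : 0 < z - c := by rw [hcz]; positivity
  refine ⟨by linarith, ?_⟩
  rw [rootLog, hcz, log_mul (by positivity) (by positivity), log_mul (by norm_num) hz0.ne',
    log_pow, log_mul hz0.ne' (by linarith)]
  ring

lemma blockingMap_ne_of_lt_of_lt (hρ : 1 ≤ ρ) {c z₁ z₂ z₃ : ℝ} (hc : 0 ≤ c)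
    (hz₁ : 0 < z₁) (h₁₂ : z₁ < z₂) (h₂₃ : z₂ < z₃) (hz₃ : z₃ < 1)
    (h₁ : blockingMap ρ z₁ = c) (h₂ : blockingMap ρ z₂ = c) : blockingMap ρ z₃ ≠ c := by
  intro h₃
  obtain ⟨hcz, hD₁⟩ := lt_and_rootLog_eq_zero_of_blockingMap_eq ⟨hz₁, by linarith⟩ h₁
  obtain ⟨-, hD₂⟩ := lt_and_rootLog_eq_zero_of_blockingMap_eq ⟨hz₁.trans h₁₂, by linarith⟩ h₂
  obtain ⟨-, hD₃⟩ :=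
    lt_and_rootLog_eq_zero_of_blockingMap_eq ⟨(hz₁.trans h₁₂).trans h₂₃, hz₃⟩ h₃
  exact rootLog_ne_zero_of_lt_of_lt (by exact_mod_cast hρ) hc hcz h₁₂ h₂₃ hz₃ hD₁ hD₂ hD₃

lemma exists_blockingMap_gt_of_alphaC_lt {α : ℝ} (hα : alphaC ρ < α) :
    0 < α ∧ ∃ x ∈ Icc (0:ℝ) 1, 1 / α - 1 < blockingMap ρ x := by
  have hne : {α : ℝ | 0 < α ∧ ∃ x ∈ Icc (0:ℝ) 1,
      x * (1 - 2 * (1 - (1 - x) ^ 2) ^ ρ) + 1 - 1 / α > 0}.Nonempty :=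
    ⟨2, by norm_num, 0, by norm_num, by norm_num⟩
  obtain ⟨β, ⟨hβ, x, hx, hxβ⟩, hβα⟩ := exists_lt_of_csInf_lt hne hα
  have hα0 := hβ.trans hβα
  refine ⟨hα0, x, hx, ?_⟩
  have := one_div_le_one_div_of_le hβ hβα.le
  rw [blockingMap]
  linarith

end BlockingMap

lemma exists_zeros_of_neg_of_pos_of_neg {f : ℝ → ℝ} {a b x₀ : ℝ} (hf : ContinuousOn f (Icc a b))
    (hx₀ : x₀ ∈ Icc a b) (ha : f a < 0) (hpos : 0 < f x₀) (hb : f b < 0) :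
    ∃ x y, x ∈ Ioo a x₀ ∧ y ∈ Ioo x₀ b ∧ f x = 0 ∧ f y = 0 := by
  obtain ⟨x, hx, hfx⟩ := intermediate_value_Ioo hx₀.1 (hf.mono (Icc_subset_Icc_right hx₀.2))
    ⟨ha, hpos⟩
  obtain ⟨y, hy, hfy⟩ := intermediate_value_Ioo' hx₀.2 (hf.mono (Icc_subset_Icc_left hx₀.1))
    ⟨hb, hpos⟩
  exact ⟨x, y, hx, hy, hfx, hfy⟩

lemma eq_or_eq_of_forall_not_three {β : Type*} [LinearOrder β] {p : β → Prop}
    (hp : ∀ a b c, a < b → b < c → p a → p b → ¬ p c) {x y z : β} (hxy : x < y)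
    (hx : p x) (hy : p y) (hz : p z) : z = x ∨ z = y := by
  rcases lt_trichotomy z x with hzx | rfl | hxz
  · exact absurd hy (hp z x y hzx hxy hz hx)
  · exact .inl rfl
  rcases lt_trichotomy z y with hzy | rfl | hyz
  · exact absurd hy (hp x z y hxz hzy hx hz)
  · exact .inr rfl
  · exact absurd hz (hp x y z hxy hyz hx hy)

theorem two_solutions_interim (ρ : ℕ) (hρ : 1 ≤ ρ) (α : ℝ)
    (hα : alphaC ρ < α) (hα1 : α < 1) :
    ∃ x y : ℝ, x ∈ Set.Ioo (0:ℝ) 1 ∧ y ∈ Set.Ioo (0:ℝ) 1 ∧ x ≠ y ∧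
      x * (1 - 2 * (1 - (1 - x) ^ 2) ^ ρ) + 1 - 1 / α = 0 ∧
      y * (1 - 2 * (1 - (1 - y) ^ 2) ^ ρ) + 1 - 1 / α = 0 ∧
      ∀ z ∈ Set.Ioo (0:ℝ) 1,
        z * (1 - 2 * (1 - (1 - z) ^ 2) ^ ρ) + 1 - 1 / α = 0 → z = x ∨ z = y := by
  obtain ⟨hα0, x₀, hx₀, hgx₀⟩ := exists_blockingMap_gt_of_alphaC_lt hα
  have hc : 0 < 1 / α - 1 := by rw [lt_sub_iff_add_lt, zero_add, lt_div_iff₀ hα0]; linarith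
  obtain ⟨x, y, hx, hy, hgx, hgy⟩ := exists_zeros_of_neg_of_pos_of_neg
    (f := fun z => blockingMap ρ z + 1 - 1 / α)
    ((continuous_blockingMap.add continuous_const).sub continuous_const).continuousOn hx₀
    (by rw [blockingMap_zero]; linarith) (by linarith) (by rw [blockingMap_one]; linarith)
  have hxI : x ∈ Ioo (0:ℝ) 1 := ⟨hx.1, hx.2.trans_le hx₀.2⟩
  have hyI : y ∈ Ioo (0:ℝ) 1 := ⟨hx₀.1.trans_lt hy.1, hy.2⟩
  have hxy : x < y := hx.2.trans hy.1
  refine ⟨x, y, hxI, hyI, hxy.ne, hgx, hgy, fun z hz hgz => eq_or_eq_of_forall_not_three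
    (p := fun z => z ∈ Ioo (0:ℝ) 1 ∧ blockingMap ρ z + 1 - 1 / α = 0)
    ?_ hxy ⟨hxI, hgx⟩ ⟨hyI, hgy⟩ ⟨hz, hgz⟩⟩
  rintro u v w huv hvw ⟨hu, hgu⟩ ⟨-, hgv⟩ ⟨hw, hgw⟩
  exact blockingMap_ne_of_lt_of_lt hρ hc.le hu.1 huv hvw hw.2 (by linarith) (by linarith)
    (by linarith)
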